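/- arXiv:1303.6240 — 3 statements merged into one kernel-verified Lean document; each statement's English description precedes it below -/
import Mathlib

section
/- Let R be a commutative ring, C an R-module with an internal direct sum decomposition C = V ⊕ W ⊕ C′ into three submodules, and d : C → C an R-linear map with d ∘ d = 0. For X, Y among {V, W, C′} write d_{Y←X} : X → Y for the component π_Y ∘ d ∘ ι_X of d, where ι denotes inclusion and π the projection associated to the direct sum decomposition. If the component d_{V←W} : W → V is bijective, then the R-linear map d′ : C′ → C′ defined by d′ = d_{C′←C′} − d_{C′←W} ∘ (d_{V←W})⁻¹ ∘ d_{V←C′} satisfies d′ ∘ d′ = 0. -/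
/-- Cancellation lemma: if the component `d_{V←W}` of a differential on
`C = V ⊕ W ⊕ C'` is bijective, then the induced map
`d' = d_{C'←C'} − d_{C'←W} ∘ (d_{V←W})⁻¹ ∘ d_{V←C'}` on `C'` squares to zero. -/
theorem stmt0 {R : Type*} [CommRing R] {C : Type*} [AddCommGroup C] [Module R C]
    (V W C' : Submodule R C)
    (πV : C →ₗ[R] V) (πW : C →ₗ[R] W) (πC : C →ₗ[R] C')
    (hsum : ∀ x : C, (πV x : C) + (πW x : C) + (πC x : C) = x)
    (hVV : ∀ v : V, πV (v : C) = v)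
    (hVW : ∀ v : V, πW (v : C) = 0)
    (hVC : ∀ v : V, πC (v : C) = 0)
    (hWV : ∀ w : W, πV (w : C) = 0)
    (hWW : ∀ w : W, πW (w : C) = w)
    (hWC : ∀ w : W, πC (w : C) = 0)
    (hCV : ∀ z : C', πV (z : C) = 0)
    (hCW : ∀ z : C', πW (z : C) = 0)
    (hCC : ∀ z : C', πC (z : C) = z)
    (d : C →ₗ[R] C) (hd : d ∘ₗ d = 0)
    (hbij : Function.Bijective (πV ∘ₗ d ∘ₗ W.subtype))
    (d' : C' →ₗ[R] C')
    (hd' : d' = (πC ∘ₗ d ∘ₗ C'.subtype)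
        - (πC ∘ₗ d ∘ₗ W.subtype) ∘ₗ
          (LinearEquiv.ofBijective (πV ∘ₗ d ∘ₗ W.subtype) hbij).symm.toLinearMap ∘ₗ
          (πV ∘ₗ d ∘ₗ C'.subtype)) :
    d' ∘ₗ d' = 0 := by
  set e := LinearEquiv.ofBijective (πV ∘ₗ d ∘ₗ W.subtype) hbij with he
  have hdd : ∀ x : C, d (d x) = 0 := fun x => by
    have := DFunLike.congr_fun hd x
    simpa using this
  have hew : ∀ w : W, e w = πV (d (w : C)) := fun w => rfl
  have hes : ∀ v : V, πV (d ((e.symm v : W) : C)) = v := fun v => by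
    rw [← hew]; exact e.apply_symm_apply v
  -- d' z = πC (d (cz z)) where cz z := z - e.symm (πV (d z))
  have hd'app : ∀ z : C', d' z = πC (d ((z : C) - ((e.symm (πV (d (z : C))) : W) : C))) := by
    intro z
    rw [hd']
    simp [map_sub, sub_eq_sub_iff_sub_eq_sub]
  -- main lemma: if πV (d c) = 0 then d' (πC (d c)) = 0
  have main : ∀ c : C, πV (d c) = 0 → d' (πC (d c)) = 0 := by
    intro c h0
    have hdc : ((πC (d c) : C)) = d c - (πW (d c) : C) := by
      have := hsum (d c)
      rw [h0] at this
      simp at this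
      linear_combination (norm := module) this
    rw [hd'app]
    have h1 : πV (d ((πC (d c) : C))) = - e (πW (d c)) := by
      rw [hdc, map_sub, map_sub, hdd, hew]
      simp
    rw [h1]
    have : (((e.symm (-e (πW (d c)))) : W) : C) = -((πW (d c) : C)) := by
      rw [map_neg, e.symm_apply_apply]
      simp
    rw [this, hdc]
    simp [hdd]
  ext z
  have h1 : πV (d ((z : C) - ((e.symm (πV (d (z : C))) : W) : C))) = 0 := by
    rw [map_sub, map_sub, hes]
    simp
  have h2 := main _ h1
  rw [← hd'app z] at h2
  simpa using h2
end

section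
/- Let R be a commutative ring, C an R-module with an internal direct sum decomposition C = V ⊕ W ⊕ C′, and d : C → C an R-linear map with d ∘ d = 0 such that the component d_{V←W} = π_V ∘ d ∘ ι_W : W → V is bijective. Define d′ = d_{C′←C′} − d_{C′←W} ∘ (d_{V←W})⁻¹ ∘ d_{V←C′} : C′ → C′, and the R-linear maps f : C′ → C, f = ι_{C′} − ι_W ∘ (d_{V←W})⁻¹ ∘ d_{V←C′}; g : C → C′, g = π_{C′} − d_{C′←W} ∘ (d_{V←W})⁻¹ ∘ π_V; and h : C → C, h = ι_W ∘ (d_{V←W})⁻¹ ∘ π_V. Then the following four identities hold: f ∘ d′ = d ∘ f, g ∘ d = d′ ∘ g, g ∘ f = id_{C′}, and id_C = f ∘ g + h ∘ d + d ∘ h. In particular (C, d) and (C′, d′) are chain homotopy equivalent. -/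
/-!
Every element `u` with `π_V u = 0` and `π_V (d u) = 0` is determined by its `C'`-component:
writing `u = w + z` with `w ∈ W`, `z ∈ C'`, the condition `π_V (d u) = 0` forces
`w = -(d_{V←W})⁻¹ (d_{V←C'} z)`, i.e. `u = f z`. All four identities follow by applying this to a
suitable element (`d (f z)` and `x - h (d x) - d (h x)`), using `d ∘ d = 0` and
`π_V ∘ d ∘ h = π_V`.
-/

namespace Cancellation

variable {R C : Type*} [Ring R] [AddCommGroup C] [Module R C] {V W C' : Submodule R C}

section Maps

variable (πV : C →ₗ[R] V) (πC : C →ₗ[R] C') (d : C →ₗ[R] C) (e : W ≃ₗ[R] V)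

def diff : C' →ₗ[R] C' :=
  (πC ∘ₗ d ∘ₗ C'.subtype) - (πC ∘ₗ d ∘ₗ W.subtype) ∘ₗ e.symm.toLinearMap ∘ₗ
    (πV ∘ₗ d ∘ₗ C'.subtype)

def incl : C' →ₗ[R] C :=
  C'.subtype - W.subtype ∘ₗ e.symm.toLinearMap ∘ₗ (πV ∘ₗ d ∘ₗ C'.subtype)

def proj : C →ₗ[R] C' :=
  πC - (πC ∘ₗ d ∘ₗ W.subtype) ∘ₗ e.symm.toLinearMap ∘ₗ πV

def homotopy : C →ₗ[R] C :=
  W.subtype ∘ₗ e.symm.toLinearMap ∘ₗ πV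

@[simp]
lemma diff_apply (z : C') :
    diff πV πC d e z = πC (d z) - πC (d (e.symm (πV (d z)))) := rfl

@[simp]
lemma incl_apply (z : C') : incl πV d e z = (z : C) - e.symm (πV (d z)) := rfl

@[simp]
lemma proj_apply (x : C) : proj πV πC d e x = πC x - πC (d (e.symm (πV x))) := rfl

@[simp]
lemma homotopy_apply (x : C) : homotopy πV e x = e.symm (πV x) := rfl

end Maps

variable {πV : C →ₗ[R] V} {πW : C →ₗ[R] W} {πC : C →ₗ[R] C'} {d : C →ₗ[R] C} {e : W ≃ₗ[R] V}

lemma apply_apply_of_comp_eq_zero (hd : d ∘ₗ d = 0) (x : C) : d (d x) = 0 :=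
  congr($hd x)

lemma projV_d_symm (he : ∀ w : W, e w = πV (d w)) (v : V) : πV (d (e.symm v)) = v := by
  rw [← he, e.apply_symm_apply]

lemma projV_incl (hWV : ∀ w : W, πV w = 0) (hCV : ∀ z : C', πV z = 0) (z : C') :
    πV (incl πV d e z) = 0 := by
  simp [hWV, hCV]

lemma projV_d_incl (he : ∀ w : W, e w = πV (d w)) (z : C') : πV (d (incl πV d e z)) = 0 := by
  simp [projV_d_symm he]

lemma projC_incl (hWC : ∀ w : W, πC w = 0) (hCC : ∀ z : C', πC z = z) (z : C') :
    πC (incl πV d e z) = z := by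
  simp [hWC, hCC]

lemma proj_of_projV_eq_zero {x : C} (hx : πV x = 0) : proj πV πC d e x = πC x := by
  simp [hx]

lemma eq_incl_projC (hsum : ∀ x : C, (πV x : C) + (πW x : C) + (πC x : C) = x)
    (he : ∀ w : W, e w = πV (d w)) {u : C} (hu : πV u = 0) (hdu : πV (d u) = 0) :
    u = incl πV d e (πC u) := by
  have hu' : (πW u : C) + πC u = u := by simpa [hu] using hsum u
  have hw : πW u = -e.symm (πV (d (πC u))) := by
    rw [← map_neg, eq_comm, LinearEquiv.symm_apply_eq, he, neg_eq_iff_add_eq_zero,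
      ← map_add, ← map_add, add_comm, hu', hdu]
  conv_lhs => rw [← hu', hw]
  rw [incl_apply, Submodule.coe_neg]
  abel

lemma projC_d_incl (z : C') : πC (d (incl πV d e z)) = diff πV πC d e z := by
  simp

lemma proj_d_homotopy (he : ∀ w : W, e w = πV (d w)) (x : C) :
    proj πV πC d e (d (homotopy πV e x)) = 0 := by
  simp [projV_d_symm he]

lemma incl_comp_diff (hsum : ∀ x : C, (πV x : C) + (πW x : C) + (πC x : C) = x)
    (he : ∀ w : W, e w = πV (d w)) (hd : d ∘ₗ d = 0) :
    incl πV d e ∘ₗ diff πV πC d e = d ∘ₗ incl πV d e := by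
  ext z
  have hdd : πV (d (d (incl πV d e z))) = 0 := by simp [apply_apply_of_comp_eq_zero hd]
  rw [LinearMap.comp_apply, LinearMap.comp_apply, eq_incl_projC hsum he (projV_d_incl he z) hdd,
    projC_d_incl]

lemma proj_comp_incl (hWV : ∀ w : W, πV w = 0) (hWC : ∀ w : W, πC w = 0)
    (hCV : ∀ z : C', πV z = 0) (hCC : ∀ z : C', πC z = z) :
    proj πV πC d e ∘ₗ incl πV d e = LinearMap.id := by
  ext z
  rw [LinearMap.comp_apply, proj_of_projV_eq_zero (projV_incl hWV hCV z), projC_incl hWC hCC,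
    LinearMap.id_apply]

lemma incl_comp_proj_add_homotopy
    (hsum : ∀ x : C, (πV x : C) + (πW x : C) + (πC x : C) = x)
    (hWV : ∀ w : W, πV w = 0) (hWC : ∀ w : W, πC w = 0)
    (he : ∀ w : W, e w = πV (d w)) (hd : d ∘ₗ d = 0) :
    LinearMap.id = incl πV d e ∘ₗ proj πV πC d e + homotopy πV e ∘ₗ d + d ∘ₗ homotopy πV e := by
  ext x
  set u := x - homotopy πV e (d x) - d (homotopy πV e x)
  have hu : πV u = 0 := by simp [u, hWV, projV_d_symm he]
  have hdu : πV (d u) = 0 := by simp [u, apply_apply_of_comp_eq_zero hd, projV_d_symm he]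
  have hCu : πC u = proj πV πC d e x := by simp [u, hWC]
  have key := eq_incl_projC hsum he hu hdu
  rw [hCu] at key
  simp only [LinearMap.id_apply, LinearMap.add_apply, LinearMap.comp_apply, ← key, u]
  abel

lemma proj_comp_d (hsum : ∀ x : C, (πV x : C) + (πW x : C) + (πC x : C) = x)
    (hWV : ∀ w : W, πV w = 0) (hWC : ∀ w : W, πC w = 0)
    (he : ∀ w : W, e w = πV (d w)) (hd : d ∘ₗ d = 0) :
    proj πV πC d e ∘ₗ d = diff πV πC d e ∘ₗ proj πV πC d e := by
  ext x
  have hx := congr($(incl_comp_proj_add_homotopy hsum hWV hWC he hd) x)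
  simp only [LinearMap.id_apply, LinearMap.add_apply, LinearMap.comp_apply] at hx
  have hdx : d x = d (incl πV d e (proj πV πC d e x)) + d (homotopy πV e (d x)) := by
    conv_lhs => rw [hx]
    rw [map_add, map_add, apply_apply_of_comp_eq_zero hd, add_zero]
  rw [LinearMap.comp_apply, LinearMap.comp_apply, hdx, map_add, proj_d_homotopy he, add_zero,
    proj_of_projV_eq_zero (projV_d_incl he _), projC_d_incl]

end Cancellation

theorem stmt1_general {R : Type*} [CommRing R] {C : Type*} [AddCommGroup C] [Module R C]
    (V W C' : Submodule R C)
    (πV : C →ₗ[R] V) (πW : C →ₗ[R] W) (πC : C →ₗ[R] C')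
    (hsum : ∀ x : C, (πV x : C) + (πW x : C) + (πC x : C) = x)
    (hWV : ∀ w : W, πV (w : C) = 0)
    (hWC : ∀ w : W, πC (w : C) = 0)
    (hCV : ∀ z : C', πV (z : C) = 0)
    (hCC : ∀ z : C', πC (z : C) = z)
    (d : C →ₗ[R] C) (hd : d ∘ₗ d = 0)
    (hbij : Function.Bijective (πV ∘ₗ d ∘ₗ W.subtype))
    (d' : C' →ₗ[R] C')
    (hd' : d' = (πC ∘ₗ d ∘ₗ C'.subtype)
        - (πC ∘ₗ d ∘ₗ W.subtype) ∘ₗ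
          (LinearEquiv.ofBijective (πV ∘ₗ d ∘ₗ W.subtype) hbij).symm.toLinearMap ∘ₗ
          (πV ∘ₗ d ∘ₗ C'.subtype))
    (f : C' →ₗ[R] C)
    (hf : f = C'.subtype
        - W.subtype ∘ₗ
          (LinearEquiv.ofBijective (πV ∘ₗ d ∘ₗ W.subtype) hbij).symm.toLinearMap ∘ₗ
          (πV ∘ₗ d ∘ₗ C'.subtype))
    (g : C →ₗ[R] C')
    (hg : g = πC
        - (πC ∘ₗ d ∘ₗ W.subtype) ∘ₗ
          (LinearEquiv.ofBijective (πV ∘ₗ d ∘ₗ W.subtype) hbij).symm.toLinearMap ∘ₗ πV)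
    (h : C →ₗ[R] C)
    (hh : h = W.subtype ∘ₗ
          (LinearEquiv.ofBijective (πV ∘ₗ d ∘ₗ W.subtype) hbij).symm.toLinearMap ∘ₗ πV) :
    f ∘ₗ d' = d ∘ₗ f ∧
    g ∘ₗ d = d' ∘ₗ g ∧
    g ∘ₗ f = LinearMap.id ∧
    (LinearMap.id : C →ₗ[R] C) = f ∘ₗ g + h ∘ₗ d + d ∘ₗ h := by
  set e := LinearEquiv.ofBijective (πV ∘ₗ d ∘ₗ W.subtype) hbij
  have he : ∀ w : W, e w = πV (d w) := fun _ => rfl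
  obtain rfl : d' = Cancellation.diff πV πC d e := hd'
  obtain rfl : f = Cancellation.incl πV d e := hf
  obtain rfl : g = Cancellation.proj πV πC d e := hg
  obtain rfl : h = Cancellation.homotopy πV e := hh
  exact ⟨Cancellation.incl_comp_diff hsum he hd,
    Cancellation.proj_comp_d hsum hWV hWC he hd,
    Cancellation.proj_comp_incl hWV hWC hCV hCC,
    Cancellation.incl_comp_proj_add_homotopy hsum hWV hWC he hd⟩

/-- The cancellation lemma with the chain homotopy equivalence data:
`f ∘ d' = d ∘ f`, `g ∘ d = d' ∘ g`, `g ∘ f = id`, and `id = f ∘ g + h ∘ d + d ∘ h`;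
in particular `(C, d)` and `(C', d')` are chain homotopy equivalent. -/
theorem stmt1 {R : Type*} [CommRing R] {C : Type*} [AddCommGroup C] [Module R C]
    (V W C' : Submodule R C)
    (πV : C →ₗ[R] V) (πW : C →ₗ[R] W) (πC : C →ₗ[R] C')
    (hsum : ∀ x : C, (πV x : C) + (πW x : C) + (πC x : C) = x)
    (hVV : ∀ v : V, πV (v : C) = v)
    (hVW : ∀ v : V, πW (v : C) = 0)
    (hVC : ∀ v : V, πC (v : C) = 0)
    (hWV : ∀ w : W, πV (w : C) = 0)
    (hWW : ∀ w : W, πW (w : C) = w)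
    (hWC : ∀ w : W, πC (w : C) = 0)
    (hCV : ∀ z : C', πV (z : C) = 0)
    (hCW : ∀ z : C', πW (z : C) = 0)
    (hCC : ∀ z : C', πC (z : C) = z)
    (d : C →ₗ[R] C) (hd : d ∘ₗ d = 0)
    (hbij : Function.Bijective (πV ∘ₗ d ∘ₗ W.subtype))
    (d' : C' →ₗ[R] C')
    (hd' : d' = (πC ∘ₗ d ∘ₗ C'.subtype)
        - (πC ∘ₗ d ∘ₗ W.subtype) ∘ₗ
          (LinearEquiv.ofBijective (πV ∘ₗ d ∘ₗ W.subtype) hbij).symm.toLinearMap ∘ₗ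
          (πV ∘ₗ d ∘ₗ C'.subtype))
    (f : C' →ₗ[R] C)
    (hf : f = C'.subtype
        - W.subtype ∘ₗ
          (LinearEquiv.ofBijective (πV ∘ₗ d ∘ₗ W.subtype) hbij).symm.toLinearMap ∘ₗ
          (πV ∘ₗ d ∘ₗ C'.subtype))
    (g : C →ₗ[R] C')
    (hg : g = πC
        - (πC ∘ₗ d ∘ₗ W.subtype) ∘ₗ
          (LinearEquiv.ofBijective (πV ∘ₗ d ∘ₗ W.subtype) hbij).symm.toLinearMap ∘ₗ πV)
    (h : C →ₗ[R] C)
    (hh : h = W.subtype ∘ₗ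
          (LinearEquiv.ofBijective (πV ∘ₗ d ∘ₗ W.subtype) hbij).symm.toLinearMap ∘ₗ πV) :
    f ∘ₗ d' = d ∘ₗ f ∧
    g ∘ₗ d = d' ∘ₗ g ∧
    g ∘ₗ f = LinearMap.id ∧
    (LinearMap.id : C →ₗ[R] C) = f ∘ₗ g + h ∘ₗ d + d ∘ₗ h :=
  stmt1_general V W C' πV πW πC hsum hWV hWC hCV hCC d hd hbij d' hd' f hf g hg h hh
end

section
/- Let K be a field, m a natural number, A = A_m(K) = K[X₁,…,X_m]/(X₁²,…,X_m²), and I ⊆ A the ideal generated by the images of X₁,…,X_m. Then I^{m+1} = 0, while I^m equals the K-linear span of the image of the monomial X₁X₂⋯X_m, which is nonzero; in particular I is nilpotent and I^m ≠ 0. -/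
set_option synthInstance.maxHeartbeats 1000000
set_option maxHeartbeats 1000000

noncomputable section
open Pointwise

/-- The ideal `(X₁², …, X_m²)` of `K[X₁, …, X_m]`. -/
def sqIdeal (K : Type*) [CommRing K] (m : ℕ) : Ideal (MvPolynomial (Fin m) K) :=
  Ideal.span (Set.range fun i : Fin m => MvPolynomial.X i ^ 2)

/-- The algebra `A_m(K) = K[X₁, …, X_m]/(X₁², …, X_m²)`. -/
abbrev Am (K : Type*) [CommRing K] (m : ℕ) : Type _ :=
  MvPolynomial (Fin m) K ⧸ sqIdeal K m

/-- The ideal `I ⊆ A_m(K)` generated by the images of `X₁, …, X_m`. -/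
def AmI (K : Type*) [CommRing K] (m : ℕ) : Ideal (Am K m) :=
  Ideal.span (Set.range fun i : Fin m => Ideal.Quotient.mk (sqIdeal K m) (MvPolynomial.X i))

open MvPolynomial in
/-- A product of variables with a repeated variable lies in `sqIdeal`. -/
lemma prod_mem_sqIdeal_of_not_inj {K : Type*} [CommRing K] {m n : ℕ}
    (F : Fin n → Fin m) (hF : ¬ Function.Injective F) :
    (∏ j : Fin n, X (F j) : MvPolynomial (Fin m) K) ∈ sqIdeal K m := by
  simp only [Function.Injective, not_forall] at hF
  obtain ⟨j, j', hjj', hne⟩ := hF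
  have hj' : j' ∈ (Finset.univ.erase j) := Finset.mem_erase.2 ⟨fun h => hne h.symm, Finset.mem_univ _⟩
  rw [← Finset.mul_prod_erase Finset.univ _ (Finset.mem_univ j),
    ← Finset.mul_prod_erase _ _ hj', ← mul_assoc, hjj', ← sq]
  exact Ideal.mul_mem_right _ _ (Ideal.subset_span ⟨F j', rfl⟩)

open MvPolynomial in
/-- A variable times the full product lies in `sqIdeal`. -/
lemma X_mul_prod_mem_sqIdeal {K : Type*} [CommRing K] {m : ℕ} (i : Fin m) :
    (X i * ∏ j : Fin m, X j : MvPolynomial (Fin m) K) ∈ sqIdeal K m := by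
  rw [← Finset.mul_prod_erase Finset.univ _ (Finset.mem_univ i), ← mul_assoc, ← sq]
  exact Ideal.mul_mem_right _ _ (Ideal.subset_span ⟨i, rfl⟩)

open MvPolynomial in
lemma prod_X_notMem_sqIdeal {K : Type*} [Field K] {m : ℕ} :
    (∏ i : Fin m, X i : MvPolynomial (Fin m) K) ∉ sqIdeal K m := by
  set s₀ : Fin m →₀ ℕ := ∑ i : Fin m, Finsupp.single i 1 with hs₀
  have hs₀app : ∀ i, s₀ i = 1 := by
    intro i
    rw [hs₀, Finsupp.finset_sum_apply]
    simp [Finsupp.single_apply]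
  intro hmem
  have hcoeff : ∀ x ∈ sqIdeal K m, coeff s₀ x = 0 := by
    intro x hx
    rw [sqIdeal] at hx
    rw [Ideal.span, Submodule.mem_span_range_iff_exists_fun] at hx
    obtain ⟨c, rfl⟩ := hx
    rw [coeff_sum]
    refine Finset.sum_eq_zero fun i _ => ?_
    rw [smul_eq_mul, X_pow_eq_monomial, coeff_mul_monomial']
    rw [if_neg]
    intro hle
    have := hle i
    simp [hs₀app i] at this
  have h1 : (∏ i : Fin m, X i : MvPolynomial (Fin m) K) = monomial s₀ 1 := by
    have hsupp : s₀.support = Finset.univ := by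
      ext i; simp [hs₀app i]
    rw [← prod_X_pow_eq_monomial, hsupp]
    exact Finset.prod_congr rfl fun i _ => by rw [hs₀app i, pow_one]
  have := hcoeff _ hmem
  rw [h1, coeff_monomial, if_pos rfl] at this
  exact one_ne_zero this

open MvPolynomial in
/-- In `A = A_m(K) = K[X₁,…,X_m]/(X₁²,…,X_m²)` with `I` the ideal
generated by the images of the `Xᵢ`, one has `I^{m+1} = 0`, while `I^m` equals the
`K`-linear span of the image of the monomial `X₁⋯X_m`, which is nonzero; in particular
`I` is nilpotent and `I^m ≠ 0`. -/
theorem stmt10 (K : Type*) [Field K] (m : ℕ) :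
    AmI K m ^ (m + 1) = ⊥ ∧
    (↑(AmI K m ^ m) : Set (Am K m)) =
      ↑(Submodule.span K
        {Ideal.Quotient.mk (sqIdeal K m) (∏ i : Fin m, MvPolynomial.X i)}) ∧
    Ideal.Quotient.mk (sqIdeal K m) (∏ i : Fin m, MvPolynomial.X i) ≠ 0 ∧
    IsNilpotent (AmI K m) ∧
    AmI K m ^ m ≠ ⊥ := by
  set π := Ideal.Quotient.mk (sqIdeal K m) with hπ
  set g : Fin m → Am K m := fun i => π (X i) with hg
  set p : Am K m := π (∏ i : Fin m, X i) with hp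
  -- extracting products of generators
  have key : ∀ (n : ℕ) (x : Am K m), x ∈ ((Set.range g) ^ n : Set (Am K m)) →
      ∃ F : Fin n → Fin m, x = π (∏ j : Fin n, X (F j)) := by
    intro n x hx
    rw [Set.mem_pow] at hx
    obtain ⟨f, hf⟩ := hx
    choose F hF using fun j => (f j).2
    refine ⟨F, ?_⟩
    rw [← hf, List.prod_ofFn, map_prod]
    exact Finset.prod_congr rfl fun j _ => (hF j).symm
  have pow_eq : ∀ n : ℕ, AmI K m ^ n = Submodule.span (Am K m) ((Set.range g) ^ n) := by
    intro n
    rw [AmI, Ideal.span, Submodule.span_pow]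
  -- Part 1 : I ^ (m+1) = ⊥
  have part1 : AmI K m ^ (m + 1) = ⊥ := by
    rw [pow_eq, ← le_bot_iff, Submodule.span_le]
    intro x hx
    obtain ⟨F, hxF⟩ := key _ x hx
    have hFni : ¬ Function.Injective F := fun hinj => by
      have := Fintype.card_le_of_injective F hinj
      simp at this
    have : (∏ j : Fin (m+1), X (F j) : MvPolynomial (Fin m) K) ∈ sqIdeal K m :=
      prod_mem_sqIdeal_of_not_inj F hFni
    rw [hxF]
    simpa using (Ideal.Quotient.eq_zero_iff_mem (I := sqIdeal K m)).2 this
  -- p ∈ I ^ m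
  have hpmem : p ∈ AmI K m ^ m := by
    have : (∏ i : Fin m, g i) ∈ ∏ _i : Fin m, AmI K m :=
      Ideal.prod_mem_prod fun i _ => Ideal.subset_span ⟨i, rfl⟩
    rw [Finset.prod_const, Finset.card_univ, Fintype.card_fin] at this
    rwa [hp, map_prod]
  -- a * p ∈ span K {p} for any a
  have L5 : ∀ a : Am K m, a * p ∈ Submodule.span K {p} := by
    intro a
    obtain ⟨f, rfl⟩ := Ideal.Quotient.mk_surjective (I := sqIdeal K m) a
    induction f using MvPolynomial.induction_on with
    | C c =>
        have hsm : c • p = π (C c) * p := by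
          rw [hp, ← map_mul, ← smul_eq_C_mul]
          exact (Submodule.Quotient.mk_smul _ c _).symm
        rw [← hsm]
        exact Submodule.smul_mem _ _ (Submodule.mem_span_singleton_self p)
    | add f₁ f₂ h1 h2 =>
        rw [map_add, add_mul]
        exact Submodule.add_mem _ h1 h2
    | mul_X f i hf =>
        have h0 : π (X i) * p = 0 := by
          rw [hp, ← map_mul, Ideal.Quotient.eq_zero_iff_mem]
          exact X_mul_prod_mem_sqIdeal i
        rw [map_mul, mul_assoc, h0, mul_zero]
        exact Submodule.zero_mem _
  -- Part 2 : set equality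
  have part2 : (↑(AmI K m ^ m) : Set (Am K m)) = ↑(Submodule.span K {p}) := by
    ext x
    simp only [SetLike.mem_coe]
    constructor
    · intro hx
      rw [pow_eq] at hx
      have hsub : ((Set.range g) ^ m : Set (Am K m)) ⊆ ↑(Ideal.span {p}) := by
        intro y hy
        obtain ⟨F, hyF⟩ := key _ y hy
        rw [hyF]
        by_cases hinj : Function.Injective F
        · have hbij : Function.Bijective F :=
            (Fintype.bijective_iff_injective_and_card F).2 ⟨hinj, rfl⟩
          have : (∏ j : Fin m, X (F j) : MvPolynomial (Fin m) K) = ∏ i : Fin m, X i :=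
            Equiv.prod_comp (Equiv.ofBijective F hbij) X
          rw [this, ← hp]
          exact Ideal.subset_span rfl
        · have : π (∏ j : Fin m, X (F j)) = 0 :=
            Ideal.Quotient.eq_zero_iff_mem.2 (prod_mem_sqIdeal_of_not_inj F hinj)
          rw [this]
          exact Submodule.zero_mem _
      have hx' : x ∈ Ideal.span {p} := Submodule.span_le.2 hsub hx
      obtain ⟨a, rfl⟩ := Ideal.mem_span_singleton'.1 hx'
      exact L5 a
    · intro hx
      obtain ⟨c, rfl⟩ := Submodule.mem_span_singleton.1 hx
      have hsm : c • p = π (C c) * p := by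
        rw [hp, ← map_mul, ← smul_eq_C_mul]
        exact (Submodule.Quotient.mk_smul _ c _).symm
      rw [hsm]
      exact Ideal.mul_mem_left _ _ hpmem
  have part3 : p ≠ 0 := by
    rw [hp, Ne, Ideal.Quotient.eq_zero_iff_mem]
    exact prod_X_notMem_sqIdeal
  refine ⟨part1, part2, part3, ⟨m + 1, by rw [part1]; rfl⟩, fun h => part3 ?_⟩
  rw [h] at hpmem
  simpa using hpmem
end
end
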